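/- For all $k,\ell\in\{1,\dots,m\}$ one has $\Phi_\mathbf{i}\big(\varphi'_\mathbf{i}(\partial_\mathbf{i}\varepsilon_k),\ \varphi'_\mathbf{i}(\partial_\mathbf{i}\varepsilon_\ell)\big)=-d_{i_k}$ if $k=\ell$, $=-(w_k\alpha_{i_k},\ w_\ell\alpha_{i_\ell})$ if $k<\ell$, and $=0$ if $k>\ell$. -/

import Mathlib

open Finset

/-- The weight lattice `𝒫`: the free abelian group with basis `{αᵢ, ωᵢ : i ∈ I}`,
represented by pairs of coefficient vectors (first component: coefficients of the `αᵢ`,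
second component: coefficients of the `ωᵢ`). -/
abbrev PLat (n : ℕ) := (Fin n → ℤ) × (Fin n → ℤ)

/-- The coroot lattice `𝒬^∨`: the free abelian group with basis `{αᵢ^∨ : i ∈ I}`,
represented by coefficient vectors. -/
abbrev QvLat (n : ℕ) := Fin n → ℤ

variable {n : ℕ}

/-- The basis element `α_j^∨` of `𝒬^∨`. -/
def coroot (j : Fin n) : QvLat n := fun k => if k = j then 1 else 0

/-- The basis element `α_j` of `𝒫`. -/
def alP (j : Fin n) : PLat n := (fun k => if k = j then 1 else 0, 0)

/-- The basis element `ω_j` of `𝒫`. -/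
def omP (j : Fin n) : PLat n := (0, fun k => if k = j then 1 else 0)

/-- The biadditive pairing `𝒬^∨ × 𝒫 → ℤ` with `(αᵢ^∨, α_j) = a_{ij}` and
`(αᵢ^∨, ω_j) = δ_{ij}`. -/
def pairQP (A : Fin n → Fin n → ℤ) (x : QvLat n) (lam : PLat n) : ℤ :=
  (∑ a, ∑ b, x a * A a b * lam.1 b) + ∑ a, x a * lam.2 a

/-- The simple reflection `sᵢ` on `𝒫`: `sᵢ α_j = α_j - a_{ij} αᵢ`,
`sᵢ ω_j = ω_j - δ_{ij} αᵢ`. -/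
def sP (A : Fin n → Fin n → ℤ) (a : Fin n) (lam : PLat n) : PLat n :=
  (fun j => if j = a then lam.1 a - ((∑ k, A a k * lam.1 k) + lam.2 a) else lam.1 j,
   lam.2)

/-- The simple reflection `sᵢ^∨` on `𝒬^∨`: `sᵢ^∨ α_j^∨ = α_j^∨ - a_{ji} αᵢ^∨`. -/
def sQ (A : Fin n → Fin n → ℤ) (a : Fin n) (x : QvLat n) : QvLat n :=
  fun j => if j = a then x a - ∑ k, A k a * x k else x j

/-- `w_ℓ = s_{i₁} ∘ ⋯ ∘ s_{i_ℓ}` on `𝒫` (with `w₀ = id`). -/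
def wP (A : Fin n → Fin n → ℤ) (ii : ℕ → Fin n) : ℕ → PLat n → PLat n
  | 0 => id
  | (l+1) => wP A ii l ∘ sP A (ii (l+1))

/-- `w_ℓ^∨ = s_{i₁}^∨ ∘ ⋯ ∘ s_{i_ℓ}^∨` on `𝒬^∨` (with `w₀ = id`). -/
def wQ (A : Fin n → Fin n → ℤ) (ii : ℕ → Fin n) : ℕ → QvLat n → QvLat n
  | 0 => id
  | (l+1) => wQ A ii l ∘ sQ A (ii (l+1))

/-- `k⁺ = min({ℓ : k < ℓ ≤ m, i_ℓ = i_k} ∪ {m+1})`. -/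
noncomputable def kplus (ii : ℕ → Fin n) (m k : ℕ) : ℕ :=
  sInf ({l | k < l ∧ l ≤ m ∧ ii l = ii k} ∪ {m+1})

/-- `k⁻ = max({ℓ : 1 ≤ ℓ < k, i_ℓ = i_k} ∪ {0})`. -/
noncomputable def kminus (ii : ℕ → Fin n) (k : ℕ) : ℕ :=
  sSup ({l | 1 ≤ l ∧ l < k ∧ ii l = ii k} ∪ {0})

/-- The standard basis vector `ε_k` of `ℤ^m` (1-based index), with the convention
`ε_s = 0` for `s ∉ {1,…,m}`. -/
def eps (m k : ℕ) : Fin m → ℤ := fun j => if (j : ℕ) + 1 = k then 1 else 0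

/-- `φ_𝐢(ε_k) = -ε_k - ε_{k⁻} - ∑_{ℓ : ℓ < k < ℓ⁺} a_{i_ℓ i_k} ε_ℓ`. -/
noncomputable def phiE (A : Fin n → Fin n → ℤ) (ii : ℕ → Fin n) (m k : ℕ) :
    Fin m → ℤ :=
  -(eps m k) - eps m (kminus ii k)
    - ∑ l : Fin m, (if (l:ℕ)+1 < k ∧ k < kplus ii m ((l:ℕ)+1)
        then A (ii ((l:ℕ)+1)) (ii k) else 0) • eps m ((l:ℕ)+1)

/-- The endomorphism `φ_𝐢` of `ℤ^m`, extended additively from its values on the basis. -/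
noncomputable def phiMap (A : Fin n → Fin n → ℤ) (ii : ℕ → Fin n) (m : ℕ)
    (v : Fin m → ℤ) : Fin m → ℤ :=
  ∑ k : Fin m, v k • phiE A ii m ((k:ℕ)+1)

/-- `φ'_𝐢(ε_ℓ) = -∑_{k=1}^{ℓ} (w_k^∨ α_{i_k}^∨, w_ℓ ω_{i_ℓ}) ε_k`. -/
def phiE' (A : Fin n → Fin n → ℤ) (ii : ℕ → Fin n) (m l : ℕ) : Fin m → ℤ :=
  -∑ k : Fin m, (if (k:ℕ)+1 ≤ l then
      pairQP A (wQ A ii ((k:ℕ)+1) (coroot (ii ((k:ℕ)+1)))) (wP A ii l (omP (ii l)))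
    else 0) • eps m ((k:ℕ)+1)

/-- The endomorphism `φ'_𝐢` of `ℤ^m`, extended additively from its values on the basis. -/
def phiMap' (A : Fin n → Fin n → ℤ) (ii : ℕ → Fin n) (m : ℕ)
    (v : Fin m → ℤ) : Fin m → ℤ :=
  ∑ l : Fin m, v l • phiE' A ii m ((l:ℕ)+1)

/-- `∂_𝐢 ε_k = ε_k - ε_{k⁻}`. -/
noncomputable def derE (ii : ℕ → Fin n) (m k : ℕ) : Fin m → ℤ :=
  eps m k - eps m (kminus ii k)

/-- The endomorphism `∂_𝐢` of `ℤ^m`. -/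
noncomputable def derMap (ii : ℕ → Fin n) (m : ℕ) (v : Fin m → ℤ) : Fin m → ℤ :=
  ∑ k : Fin m, v k • derE ii m ((k:ℕ)+1)

/-- `∫_𝐢 ε_k = ε_k + ε_{k⁻} + ε_{(k⁻)⁻} + ⋯` (summing along the chain `k > k⁻ > ⋯ > 0`). -/
noncomputable def intE (ii : ℕ → Fin n) (m : ℕ) (k : ℕ) : Fin m → ℤ :=
  if h : kminus ii k < k then eps m k + intE ii m (kminus ii k) else eps m k
termination_by k
decreasing_by exact h

/-- The endomorphism `∫_𝐢` of `ℤ^m`. -/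
noncomputable def intMap (ii : ℕ → Fin n) (m : ℕ) (v : Fin m → ℤ) : Fin m → ℤ :=
  ∑ k : Fin m, v k • intE ii m ((k:ℕ)+1)

/-- The skew-symmetric biadditive form `Λ_𝐢` on `ℤ^m` with
`Λ_𝐢(ε_k, ε_ℓ) = sgn(k-ℓ) c_{i_k i_ℓ}` where `c_{ij} = dᵢ a_{ij}`. -/
def LamF (A : Fin n → Fin n → ℤ) (d : Fin n → ℤ) (ii : ℕ → Fin n) (m : ℕ)
    (a b : Fin m → ℤ) : ℤ :=
  ∑ k : Fin m, ∑ l : Fin m, a k * b l *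
    ((((k:ℕ):ℤ) - ((l:ℕ):ℤ)).sign *
      (d (ii ((k:ℕ)+1)) * A (ii ((k:ℕ)+1)) (ii ((l:ℕ)+1))))

/-- The biadditive form `Φ_𝐢` on `ℤ^m` with `Φ_𝐢(ε_k,ε_ℓ) = -d_{i_k}` if `k = ℓ`,
`= -c_{i_ℓ i_k}` if `ℓ < k`, and `= 0` if `ℓ > k`. -/
def PhiF (A : Fin n → Fin n → ℤ) (d : Fin n → ℤ) (ii : ℕ → Fin n) (m : ℕ)
    (a b : Fin m → ℤ) : ℤ :=
  ∑ k : Fin m, ∑ l : Fin m, a k * b l *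
    (if (k:ℕ) = (l:ℕ) then -(d (ii ((k:ℕ)+1)))
     else if (l:ℕ) < (k:ℕ) then
       -(d (ii ((l:ℕ)+1)) * A (ii ((l:ℕ)+1)) (ii ((k:ℕ)+1)))
     else 0)

/-- The entry `b_{pk}` of the exchange matrix `B̃_𝐢`. -/
noncomputable def bcoef (A : Fin n → Fin n → ℤ) (ii : ℕ → Fin n) (m p k : ℕ) : ℤ :=
  if p = kminus ii k then -1
  else if p < k ∧ k < kplus ii m p ∧ kplus ii m p < kplus ii m k then
    -(A (ii p) (ii k))
  else if k < p ∧ p < kplus ii m k ∧ kplus ii m k < kplus ii m p then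
    A (ii p) (ii k)
  else if p = kplus ii m k then 1
  else 0

/-- The column `𝐛^k = ∑_p b_{pk} ε_p ∈ ℤ^m` of the exchange matrix. -/
noncomputable def bvec (A : Fin n → Fin n → ℤ) (ii : ℕ → Fin n) (m k : ℕ) :
    Fin m → ℤ :=
  fun p => bcoef A ii m ((p:ℕ)+1) k

/-- `ρ_𝐢⁺(ε_k) = ε_k + ∑_{ℓ<k, ℓ⁺=m+1} a_{i_ℓ i_k} ε_ℓ`. -/
noncomputable def rhoPE (A : Fin n → Fin n → ℤ) (ii : ℕ → Fin n) (m k : ℕ) :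
    Fin m → ℤ :=
  eps m k + ∑ l : Fin m, (if (l:ℕ)+1 < k ∧ kplus ii m ((l:ℕ)+1) = m+1
      then A (ii ((l:ℕ)+1)) (ii k) else 0) • eps m ((l:ℕ)+1)

/-- `ρ_𝐢⁻(ε_k) = ε_k - ∑_{ℓ≤k, ℓ⁺=m+1} a_{i_ℓ i_k} ε_ℓ`. -/
noncomputable def rhoME (A : Fin n → Fin n → ℤ) (ii : ℕ → Fin n) (m k : ℕ) :
    Fin m → ℤ :=
  eps m k - ∑ l : Fin m, (if (l:ℕ)+1 ≤ k ∧ kplus ii m ((l:ℕ)+1) = m+1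
      then A (ii ((l:ℕ)+1)) (ii k) else 0) • eps m ((l:ℕ)+1)

/-- The endomorphism `ρ_𝐢⁺` of `ℤ^m`. -/
noncomputable def rhoPMap (A : Fin n → Fin n → ℤ) (ii : ℕ → Fin n) (m : ℕ)
    (v : Fin m → ℤ) : Fin m → ℤ :=
  ∑ k : Fin m, v k • rhoPE A ii m ((k:ℕ)+1)

/-- The endomorphism `ρ_𝐢⁻` of `ℤ^m`. -/
noncomputable def rhoMMap (A : Fin n → Fin n → ℤ) (ii : ℕ → Fin n) (m : ℕ)
    (v : Fin m → ℤ) : Fin m → ℤ :=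
  ∑ k : Fin m, v k • rhoME A ii m ((k:ℕ)+1)

/-- `𝐚_λ = -∑_{k=1}^m (w_k^∨ α_{i_k}^∨, w_m λ) ε_k ∈ ℤ^m`. -/
def avec (A : Fin n → Fin n → ℤ) (ii : ℕ → Fin n) (m : ℕ) (lam : PLat n) :
    Fin m → ℤ :=
  fun k => -(pairQP A (wQ A ii ((k:ℕ)+1) (coroot (ii ((k:ℕ)+1)))) (wP A ii m lam))

/-- `|𝐚| = ∑_{k=1}^m a_k α_{i_k} ∈ 𝒬 ⊆ 𝒫`. -/
def degP (ii : ℕ → Fin n) (m : ℕ) (a : Fin m → ℤ) : PLat n :=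
  (fun j => ∑ k : Fin m, if ii ((k:ℕ)+1) = j then a k else 0, 0)

/-- The pairing `(μ, λ) = ∑ mᵢ dᵢ (αᵢ^∨, λ)` for `μ = ∑ mᵢ αᵢ ∈ 𝒬` and `λ ∈ 𝒫`
(induced by identifying `αᵢ` with `dᵢ αᵢ^∨`). -/
def pairAl (A : Fin n → Fin n → ℤ) (d : Fin n → ℤ) (mu lam : PLat n) : ℤ :=
  ∑ j, mu.1 j * (d j * pairQP A (coroot j) lam)


/-!
Write `β_k = w_k α_{i_k}` and `β_k^∨ = w_k^∨ α_{i_k}^∨`. Since `w_k ω_{i_k} = w_{k⁻} ω_{i_k} + β_k`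
and `(β_p^∨, w_{k⁻} ω_{i_k}) = -δ_{pk}` for `k⁻ < p ≤ k`, the vector `φ'_𝐢(∂_𝐢 ε_k)` equals
`ε_k - ∑_{p ≤ k} (β_p^∨, β_k) ε_p`. Telescoping the reflections gives
`w_k^∨ α_{i_q}^∨ = β_q^∨ + ∑_{q < p ≤ k} a_{i_q i_p} β_p^∨`; pairing this with `β_k` shows that
`Φ_𝐢(φ'_𝐢(∂_𝐢 ε_k), ·)` is `d_{i_k}` times the `k`-th coordinate. The `k`-th coordinate of
`φ'_𝐢(∂_𝐢 ε_ℓ)` is `δ_{kℓ} - [k ≤ ℓ] (β_k^∨, β_ℓ)`, and `d_{i_k} (β_k^∨, β_ℓ) = (β_k, β_ℓ)` by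
symmetrizability.
-/

open Matrix

section Pairing

variable (A : Fin n → Fin n → ℤ)

lemma coroot_eq_single (j : Fin n) : coroot j = Pi.single j 1 := by
  ext k; simp [coroot, Pi.single_apply]

lemma pairQP_eq_dotProduct (x : QvLat n) (lam : PLat n) :
    pairQP A x lam = x ⬝ᵥ (of A *ᵥ lam.1 + lam.2) := by
  simp [pairQP, dotProduct, mulVec, mul_add, Finset.sum_add_distrib, Finset.mul_sum, mul_assoc]

lemma pairQP_add_left (x y : QvLat n) (lam : PLat n) :
    pairQP A (x + y) lam = pairQP A x lam + pairQP A y lam := by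
  simp only [pairQP_eq_dotProduct, add_dotProduct]

lemma pairQP_sub_left (x y : QvLat n) (lam : PLat n) :
    pairQP A (x - y) lam = pairQP A x lam - pairQP A y lam := by
  simp only [pairQP_eq_dotProduct, sub_dotProduct]

lemma pairQP_neg_left (x : QvLat n) (lam : PLat n) :
    pairQP A (-x) lam = -pairQP A x lam := by
  simp only [pairQP_eq_dotProduct, neg_dotProduct]

lemma pairQP_smul_left (c : ℤ) (x : QvLat n) (lam : PLat n) :
    pairQP A (c • x) lam = c * pairQP A x lam := by
  simp only [pairQP_eq_dotProduct, smul_dotProduct, smul_eq_mul]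

lemma pairQP_sum_left {ι : Type*} (s : Finset ι) (x : ι → QvLat n) (lam : PLat n) :
    pairQP A (∑ p ∈ s, x p) lam = ∑ p ∈ s, pairQP A (x p) lam := by
  simp only [pairQP_eq_dotProduct, sum_dotProduct]

lemma pairQP_add_right (x : QvLat n) (lam mu : PLat n) :
    pairQP A x (lam + mu) = pairQP A x lam + pairQP A x mu := by
  simp only [pairQP_eq_dotProduct, Prod.fst_add, Prod.snd_add, mulVec_add, ← dotProduct_add,
    add_add_add_comm]

lemma pairQP_sub_right (x : QvLat n) (lam mu : PLat n) :
    pairQP A x (lam - mu) = pairQP A x lam - pairQP A x mu := by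
  simp only [pairQP_eq_dotProduct, Prod.fst_sub, Prod.snd_sub, mulVec_sub, ← dotProduct_sub,
    add_sub_add_comm]

lemma pairQP_smul_right (c : ℤ) (x : QvLat n) (lam : PLat n) :
    pairQP A x (c • lam) = c * pairQP A x lam := by
  simp only [pairQP_eq_dotProduct, Prod.smul_fst, Prod.smul_snd, mulVec_smul, ← smul_add,
    dotProduct_smul, smul_eq_mul]

lemma pairQP_coroot (j : Fin n) (lam : PLat n) :
    pairQP A (coroot j) lam = (of A *ᵥ lam.1) j + lam.2 j := by
  simp [pairQP_eq_dotProduct, coroot_eq_single]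

lemma pairQP_alP (x : QvLat n) (j : Fin n) : pairQP A x (alP j) = (x ᵥ* of A) j := by
  simp only [pairQP_eq_dotProduct, alP, ← Pi.single_apply, mulVec_single, MulOpposite.op_one,
    one_smul, add_zero, dotProduct_comm x, vecMul]
  rfl

lemma pairQP_coroot_alP (i j : Fin n) : pairQP A (coroot i) (alP j) = A i j := by
  simp [pairQP_coroot, alP, mulVec, dotProduct]

lemma pairQP_coroot_omP (i j : Fin n) :
    pairQP A (coroot i) (omP j) = if i = j then 1 else 0 := by
  simp [pairQP_coroot, omP]

end Pairing

section Reflections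

variable (A : Fin n → Fin n → ℤ)

lemma sQ_eq (a : Fin n) (x : QvLat n) : sQ A a x = x - pairQP A x (alP a) • coroot a := by
  ext j; by_cases h : j = a <;> simp [sQ, pairQP_alP, coroot, h, vecMul, dotProduct, mul_comm]

lemma sP_eq (a : Fin n) (lam : PLat n) :
    sP A a lam = lam - pairQP A (coroot a) lam • alP a := by
  refine Prod.ext ?_ ?_
  · ext j; by_cases h : j = a <;> simp [sP, pairQP_coroot, alP, h, mulVec, dotProduct]
  · simp [sP, alP]

lemma pairQP_sQ_sP (hA : ∀ i, A i i = 2) (a : Fin n) (x : QvLat n) (lam : PLat n) :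
    pairQP A (sQ A a x) (sP A a lam) = pairQP A x lam := by
  rw [sQ_eq, sP_eq]
  simp only [pairQP_sub_left, pairQP_sub_right, pairQP_smul_left, pairQP_smul_right,
    pairQP_coroot_alP, hA]
  ring

lemma sQ_add (a : Fin n) (x y : QvLat n) : sQ A a (x + y) = sQ A a x + sQ A a y := by
  simp only [sQ_eq, pairQP_add_left, add_smul]; abel

lemma sP_add (a : Fin n) (lam mu : PLat n) : sP A a (lam + mu) = sP A a lam + sP A a mu := by
  simp only [sP_eq, pairQP_add_right, add_smul]; abel

lemma sQ_coroot (a j : Fin n) : sQ A a (coroot j) = coroot j - A j a • coroot a := by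
  rw [sQ_eq, pairQP_coroot_alP]

lemma sQ_coroot_self (hA : ∀ i, A i i = 2) (a : Fin n) : sQ A a (coroot a) = -coroot a := by
  rw [sQ_coroot, hA, two_smul]; abel

lemma sP_alP_self (hA : ∀ i, A i i = 2) (a : Fin n) : sP A a (alP a) = -alP a := by
  rw [sP_eq, pairQP_coroot_alP, hA, two_smul]; abel

lemma sP_omP_self (a : Fin n) : sP A a (omP a) = omP a - alP a := by
  rw [sP_eq, pairQP_coroot_omP, if_pos rfl, one_smul]

lemma sP_omP_of_ne {a c : Fin n} (h : a ≠ c) : sP A a (omP c) = omP c := by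
  rw [sP_eq, pairQP_coroot_omP, if_neg h, zero_smul, sub_zero]

end Reflections

section WeylGroup

variable (A : Fin n → Fin n → ℤ) (ii : ℕ → Fin n)

lemma wQ_add (l : ℕ) (x y : QvLat n) : wQ A ii l (x + y) = wQ A ii l x + wQ A ii l y := by
  induction l generalizing x y with
  | zero => rfl
  | succ l ih => simp only [wQ, Function.comp_apply, sQ_add, ih]

lemma wP_add (l : ℕ) (lam mu : PLat n) : wP A ii l (lam + mu) = wP A ii l lam + wP A ii l mu := by
  induction l generalizing lam mu with
  | zero => rfl
  | succ l ih => simp only [wP, Function.comp_apply, sP_add, ih]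

lemma wQ_neg (l : ℕ) (x : QvLat n) : wQ A ii l (-x) = -wQ A ii l x :=
  map_neg (AddMonoidHom.mk' (wQ A ii l) (wQ_add A ii l)) x

lemma wQ_sub (l : ℕ) (x y : QvLat n) : wQ A ii l (x - y) = wQ A ii l x - wQ A ii l y :=
  map_sub (AddMonoidHom.mk' (wQ A ii l) (wQ_add A ii l)) x y

lemma wQ_zsmul (l : ℕ) (c : ℤ) (x : QvLat n) : wQ A ii l (c • x) = c • wQ A ii l x :=
  map_zsmul (AddMonoidHom.mk' (wQ A ii l) (wQ_add A ii l)) c x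

lemma wP_neg (l : ℕ) (lam : PLat n) : wP A ii l (-lam) = -wP A ii l lam :=
  map_neg (AddMonoidHom.mk' (wP A ii l) (wP_add A ii l)) lam

lemma wP_sub (l : ℕ) (lam mu : PLat n) : wP A ii l (lam - mu) = wP A ii l lam - wP A ii l mu :=
  map_sub (AddMonoidHom.mk' (wP A ii l) (wP_add A ii l)) lam mu

lemma pairQP_wQ_wP (hA : ∀ i, A i i = 2) (l : ℕ) (x : QvLat n) (lam : PLat n) :
    pairQP A (wQ A ii l x) (wP A ii l lam) = pairQP A x lam := by
  induction l generalizing x lam with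
  | zero => rfl
  | succ l ih => simp only [wQ, wP, Function.comp_apply, ih, pairQP_sQ_sP A hA]

lemma wQ_succ_coroot_self (hA : ∀ i, A i i = 2) (l : ℕ) :
    wQ A ii (l + 1) (coroot (ii (l + 1))) = -wQ A ii l (coroot (ii (l + 1))) := by
  rw [wQ, Function.comp_apply, sQ_coroot_self A hA, wQ_neg]

lemma wP_succ_alP_self (hA : ∀ i, A i i = 2) (l : ℕ) :
    wP A ii (l + 1) (alP (ii (l + 1))) = -wP A ii l (alP (ii (l + 1))) := by
  rw [wP, Function.comp_apply, sP_alP_self A hA, wP_neg]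

lemma wQ_coroot_eq_add_sum (hA : ∀ i, A i i = 2) {q k : ℕ} (hqk : q ≤ k) :
    wQ A ii k (coroot (ii q)) = wQ A ii q (coroot (ii q)) +
      ∑ p ∈ Ioc q k, A (ii q) (ii p) • wQ A ii p (coroot (ii p)) := by
  induction k, hqk using Nat.le_induction with
  | base => simp
  | succ k hqk ih =>
    rw [Finset.sum_Ioc_succ_top hqk, ← add_assoc, ← ih, wQ_succ_coroot_self A ii hA, smul_neg,
      ← sub_eq_add_neg, ← wQ_zsmul, ← wQ_sub, ← sQ_coroot]
    rfl

lemma wP_omP_eq_of_forall_ne (c : Fin n) {j' j : ℕ} (h : j' ≤ j)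
    (hne : ∀ t, j' < t → t ≤ j → ii t ≠ c) : wP A ii j (omP c) = wP A ii j' (omP c) := by
  induction j, h using Nat.le_induction with
  | base => rfl
  | succ j hj ih =>
    rw [wP, Function.comp_apply, sP_omP_of_ne A (hne (j + 1) (by omega) le_rfl)]
    exact ih fun t h1 h2 => hne t h1 (by omega)

end WeylGroup

section PreviousOccurrence

variable (ii : ℕ → Fin n)

lemma bddAbove_kminus_set (k : ℕ) :
    BddAbove ({l | 1 ≤ l ∧ l < k ∧ ii l = ii k} ∪ {0} : Set ℕ) :=
  ⟨k, by rintro x (⟨-, hx, -⟩ | rfl); exacts [hx.le, Nat.zero_le k]⟩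

lemma kminus_mem (k : ℕ) :
    kminus ii k ∈ ({l | 1 ≤ l ∧ l < k ∧ ii l = ii k} ∪ {0} : Set ℕ) :=
  Nat.sSup_mem ⟨0, Or.inr rfl⟩ (bddAbove_kminus_set ii k)

lemma kminus_lt {k : ℕ} (hk : 1 ≤ k) : kminus ii k < k := by
  rcases kminus_mem ii k with ⟨-, h, -⟩ | h
  · exact h
  · rw [Set.mem_singleton_iff.1 h]; omega

lemma ii_kminus {k : ℕ} (h : 1 ≤ kminus ii k) : ii (kminus ii k) = ii k := by
  rcases kminus_mem ii k with ⟨-, -, h'⟩ | h'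
  · exact h'
  · rw [Set.mem_singleton_iff.1 h'] at h; omega

lemma ii_ne_of_kminus_lt {k t : ℕ} (h1 : kminus ii k < t) (h2 : t < k) : ii t ≠ ii k := by
  intro h
  have : t ≤ kminus ii k :=
    le_csSup (bddAbove_kminus_set ii k) (Or.inl ⟨by omega, h2, h⟩)
  omega

end PreviousOccurrence

section Roots

variable (A : Fin n → Fin n → ℤ) (ii : ℕ → Fin n)

/-- `(β_p^∨, β_k)` for the coroots `β_p^∨ = w_p^∨ α_{i_p}^∨` and roots `β_k = w_k α_{i_k}`. -/
def corootRootPairing (p k : ℕ) : ℤ :=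
  pairQP A (wQ A ii p (coroot (ii p))) (wP A ii k (alP (ii k)))

lemma corootRootPairing_self (hA : ∀ i, A i i = 2) (k : ℕ) : corootRootPairing A ii k k = 2 := by
  rw [corootRootPairing, pairQP_wQ_wP A ii hA, pairQP_coroot_alP, hA]

lemma corootRootPairing_add_sum (hA : ∀ i, A i i = 2) {q k : ℕ} (hqk : q ≤ k) :
    corootRootPairing A ii q k + ∑ p ∈ Ioc q k, A (ii q) (ii p) * corootRootPairing A ii p k =
      A (ii q) (ii k) := by
  have h := congrArg (pairQP A · (wP A ii k (alP (ii k)))) (wQ_coroot_eq_add_sum A ii hA hqk)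
  simp only [pairQP_wQ_wP A ii hA, pairQP_coroot_alP, pairQP_add_left, pairQP_sum_left,
    pairQP_smul_left] at h
  exact h.symm

lemma wP_omP_eq_kminus_add (hA : ∀ i, A i i = 2) {k : ℕ} (hk : 1 ≤ k) :
    wP A ii k (omP (ii k)) = wP A ii (kminus ii k) (omP (ii k)) + wP A ii k (alP (ii k)) := by
  obtain ⟨k, rfl⟩ : ∃ k', k = k' + 1 := ⟨k - 1, by omega⟩
  have hfix : wP A ii k (omP (ii (k + 1))) = wP A ii (kminus ii (k + 1)) (omP (ii (k + 1))) :=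
    wP_omP_eq_of_forall_ne A ii _ (by have := kminus_lt ii hk; omega)
      fun t h1 h2 => ii_ne_of_kminus_lt ii h1 (by omega)
  rw [wP_succ_alP_self A ii hA, wP, Function.comp_apply, sP_omP_self, wP_sub, hfix,
    sub_eq_add_neg]

lemma pairQP_wQ_coroot_wP_kminus_omP (hA : ∀ i, A i i = 2) {k p : ℕ} (hp : kminus ii k < p)
    (hpk : p ≤ k) :
    pairQP A (wQ A ii p (coroot (ii p))) (wP A ii (kminus ii k) (omP (ii k))) =
      if p = k then -1 else 0 := by
  obtain ⟨p, rfl⟩ : ∃ p', p = p' + 1 := ⟨p - 1, by omega⟩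
  have hfix : wP A ii (kminus ii k) (omP (ii k)) = wP A ii p (omP (ii k)) :=
    (wP_omP_eq_of_forall_ne A ii _ (by omega)
      fun t h1 h2 => ii_ne_of_kminus_lt ii h1 (by omega)).symm
  rw [hfix, wQ_succ_coroot_self A ii hA, pairQP_neg_left, pairQP_wQ_wP A ii hA,
    pairQP_coroot_omP]
  by_cases h : p + 1 = k
  · simp [h]
  · simp [h, ii_ne_of_kminus_lt ii hp (by omega)]

end Roots

section StandardBasis

variable {m : ℕ}

lemma eps_zero : eps m 0 = 0 := by
  ext j; simp [eps]

lemma eps_eq_single {p : ℕ} (hp : 1 ≤ p) (hpm : p ≤ m) :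
    eps m p = Pi.single ⟨p - 1, by omega⟩ 1 := by
  ext j
  simp only [eps, Pi.single_apply, Fin.ext_iff]
  split_ifs <;> omega

lemma sum_eps_smul {M : Type*} [AddCommGroup M] {k : ℕ} (hk : 1 ≤ k) (hkm : k ≤ m)
    (f : ℕ → M) : ∑ j : Fin m, eps m k j • f (j + 1) = f k := by
  simp [eps_eq_single hk hkm, Pi.single_apply, Nat.sub_add_cancel hk]

lemma eps_dotProduct {k : ℕ} (hk : 1 ≤ k) (hkm : k ≤ m) (v : Fin m → ℤ) :
    eps m k ⬝ᵥ v = v ⟨k - 1, by omega⟩ := by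
  rw [eps_eq_single hk hkm, single_one_dotProduct]

lemma sum_Icc_smul_eps_apply (c : ℕ → ℤ) (l : ℕ) (j : Fin m) :
    (∑ p ∈ Icc 1 l, c p • eps m p) j = if (j : ℕ) + 1 ≤ l then c (j + 1) else 0 := by
  simp [Finset.sum_apply, eps, eq_comm (a := (j : ℕ) + 1)]

end StandardBasis

section PhiPrime

variable (A : Fin n → Fin n → ℤ) (ii : ℕ → Fin n) {m : ℕ}

lemma phiE'_apply (l : ℕ) (j : Fin m) :
    phiE' A ii m l j = -if (j : ℕ) + 1 ≤ l then
      pairQP A (wQ A ii (j + 1) (coroot (ii (j + 1)))) (wP A ii l (omP (ii l))) else 0 := by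
  simp only [phiE', Pi.neg_apply, Finset.sum_apply, Pi.smul_apply, eps, smul_eq_mul]
  simp [Fin.val_inj]

lemma phiMap'_sub (v w : Fin m → ℤ) :
    phiMap' A ii m (v - w) = phiMap' A ii m v - phiMap' A ii m w := by
  simp [phiMap', sub_smul]

lemma phiMap'_eps {k : ℕ} (hkm : k ≤ m) : phiMap' A ii m (eps m k) = phiE' A ii m k := by
  rcases Nat.eq_zero_or_pos k with rfl | hk
  · ext j; simp [phiMap', eps_zero, phiE'_apply]
  · exact sum_eps_smul hk hkm _

lemma derMap_eps {k : ℕ} (hk : 1 ≤ k) (hkm : k ≤ m) :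
    derMap ii m (eps m k) = eps m k - eps m (kminus ii k) :=
  sum_eps_smul hk hkm _

lemma phiMap'_derMap_eps_apply (hA : ∀ i, A i i = 2) {k : ℕ} (hk : 1 ≤ k) (hkm : k ≤ m)
    (j : Fin m) :
    phiMap' A ii m (derMap ii m (eps m k)) j =
      (if (j : ℕ) + 1 = k then 1 else 0) -
        if (j : ℕ) + 1 ≤ k then corootRootPairing A ii (j + 1) k else 0 := by
  have hkm' := kminus_lt ii hk
  rw [derMap_eps ii hk hkm, phiMap'_sub, phiMap'_eps A ii hkm, phiMap'_eps A ii (by omega),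
    Pi.sub_apply, phiE'_apply, phiE'_apply]
  by_cases hjk : (j : ℕ) + 1 ≤ k
  · rw [wP_omP_eq_kminus_add A ii hA hk, pairQP_add_right]
    by_cases hjm : (j : ℕ) + 1 ≤ kminus ii k
    · rw [ii_kminus ii (by omega)]
      simp [hjk, hjm, corootRootPairing, show (j : ℕ) + 1 ≠ k by omega]
    · rw [pairQP_wQ_coroot_wP_kminus_omP A ii hA (by omega) hjk]
      simp only [hjk, hjm, if_true, if_false, corootRootPairing]
      split_ifs <;> ring
  · simp [hjk, show ¬(j : ℕ) + 1 ≤ kminus ii k by omega, show (j : ℕ) + 1 ≠ k by omega]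

lemma phiMap'_derMap_eps (hA : ∀ i, A i i = 2) {k : ℕ} (hk : 1 ≤ k) (hkm : k ≤ m) :
    phiMap' A ii m (derMap ii m (eps m k)) =
      eps m k - ∑ p ∈ Icc 1 k, corootRootPairing A ii p k • eps m p := by
  ext j
  rw [phiMap'_derMap_eps_apply A ii hA hk hkm, Pi.sub_apply, sum_Icc_smul_eps_apply]
  rfl

end PhiPrime

section PhiForm

variable (A : Fin n → Fin n → ℤ) (d : Fin n → ℤ) (ii : ℕ → Fin n) {m : ℕ}

/-- `Φ_𝐢(ε_p, ε_q)`, with `1`-based indices. -/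
def phiEntry (p q : ℕ) : ℤ :=
  if p = q then -d (ii p) else if q < p then -(d (ii q) * A (ii q) (ii p)) else 0

def phiMatrix (m : ℕ) : Matrix (Fin m) (Fin m) ℤ :=
  of fun k l => phiEntry A d ii (k + 1) (l + 1)

lemma PhiF_eq_vecMul_dotProduct (a b : Fin m → ℤ) :
    PhiF A d ii m a b = a ᵥ* phiMatrix A d ii m ⬝ᵥ b := by
  simp only [PhiF, dotProduct, vecMul, Finset.sum_mul]
  rw [Finset.sum_comm]
  refine Finset.sum_congr rfl fun k _ => Finset.sum_congr rfl fun l _ => ?_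
  simp only [phiMatrix, phiEntry, of_apply, add_left_inj, add_lt_add_iff_right]
  split_ifs <;> ring

lemma eps_vecMul_phiMatrix_apply {p : ℕ} (hp : 1 ≤ p) (hpm : p ≤ m) (q : Fin m) :
    (eps m p ᵥ* phiMatrix A d ii m) q = phiEntry A d ii p (q + 1) := by
  simp [eps_eq_single hp hpm, phiMatrix, Nat.sub_add_cancel hp]

lemma sum_Icc_mul_phiEntry (b : ℕ → ℤ) {q k : ℕ} (hq : 1 ≤ q) :
    ∑ p ∈ Icc 1 k, b p * phiEntry A d ii p q =
      if q ≤ k then -d (ii q) * (b q + ∑ p ∈ Ioc q k, A (ii q) (ii p) * b p) else 0 := by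
  have hvanish : ∀ p ∈ Icc 1 k, p ∉ Icc q k → b p * phiEntry A d ii p q = 0 := by
    intro p hp hpq
    simp only [mem_Icc] at hp hpq
    simp [phiEntry, show p ≠ q by omega, show ¬q < p by omega]
  rw [← Finset.sum_subset (Icc_subset_Icc_left hq) hvanish]
  split_ifs with hqk
  · rw [Icc_eq_cons_Ioc hqk, sum_cons, mul_add, Finset.mul_sum]
    congr 1
    · rw [phiEntry, if_pos rfl]; ring
    · refine Finset.sum_congr rfl fun p hp => ?_
      rw [phiEntry, if_neg (mem_Ioc.1 hp).1.ne', if_pos (mem_Ioc.1 hp).1]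
      ring
  · rw [Icc_eq_empty (by omega), sum_empty]

lemma phiMap'_derMap_eps_vecMul_phiMatrix (hA : ∀ i, A i i = 2) {k : ℕ} (hk : 1 ≤ k)
    (hkm : k ≤ m) :
    phiMap' A ii m (derMap ii m (eps m k)) ᵥ* phiMatrix A d ii m = d (ii k) • eps m k := by
  ext q
  have hrow : ∀ p ∈ Icc 1 k, (eps m p ᵥ* phiMatrix A d ii m) q = phiEntry A d ii p (q + 1) :=
    fun p hp => eps_vecMul_phiMatrix_apply A d ii (mem_Icc.1 hp).1 (by simp at hp; omega) q
  simp only [phiMap'_derMap_eps A ii hA hk hkm, sub_vecMul, sum_vecMul, smul_vecMul,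
    Pi.sub_apply, Finset.sum_apply, Pi.smul_apply, smul_eq_mul]
  rw [Finset.sum_congr rfl fun p hp => by rw [hrow p hp],
    eps_vecMul_phiMatrix_apply A d ii hk hkm, sum_Icc_mul_phiEntry A d ii _ (by omega)]
  split_ifs with hqk
  · rw [corootRootPairing_add_sum A ii hA hqk]
    rcases hqk.eq_or_lt with hqk | hqk
    · simp only [phiEntry, eps, hqk, if_true, hA]; ring
    · simp [phiEntry, eps, hqk, hqk.ne, hqk.ne']
  · simp [phiEntry, eps, show k ≠ (q : ℕ) + 1 by omega, show (q : ℕ) + 1 ≠ k by omega,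
      show ¬(q : ℕ) + 1 < k by omega]

end PhiForm

section Symmetrization

variable (A : Fin n → Fin n → ℤ) (d : Fin n → ℤ) (ii : ℕ → Fin n)

/-- The identification `α_j ↦ d_j α_j^∨` of `𝒬` with a sublattice of `𝒬^∨`. -/
def toCoroot (mu : PLat n) : QvLat n := fun j => d j * mu.1 j

lemma pairAl_eq_pairQP_toCoroot (mu lam : PLat n) :
    pairAl A d mu lam = pairQP A (toCoroot d mu) lam := by
  simp only [pairAl, pairQP_coroot]
  rw [pairQP_eq_dotProduct]
  exact Finset.sum_congr rfl fun j _ => by simp only [toCoroot, Pi.add_apply]; ring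

lemma toCoroot_alP (j : Fin n) : toCoroot d (alP j) = d j • coroot j := by
  ext k; by_cases h : k = j <;> simp [toCoroot, alP, coroot, h]

lemma toCoroot_sP (hsym : ∀ i j, d i * A i j = d j * A j i) (a : Fin n) {mu : PLat n}
    (hmu : mu.2 = 0) : toCoroot d (sP A a mu) = sQ A a (toCoroot d mu) := by
  ext j
  by_cases h : j = a
  · subst h
    have hsum : d j * ∑ t, A j t * mu.1 t = ∑ t, A t j * (d t * mu.1 t) := by
      rw [Finset.mul_sum]
      exact Finset.sum_congr rfl fun t _ => by rw [← mul_assoc, hsym]; ring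
    simp [toCoroot, sP, sQ, hmu, mul_sub, hsum]
  · simp [toCoroot, sP, sQ, h]

lemma toCoroot_wP (hsym : ∀ i j, d i * A i j = d j * A j i) (l : ℕ) {mu : PLat n}
    (hmu : mu.2 = 0) : toCoroot d (wP A ii l mu) = wQ A ii l (toCoroot d mu) := by
  induction l generalizing mu with
  | zero => rfl
  | succ l ih =>
    simp only [wP, wQ, Function.comp_apply]
    rw [ih (mu := sP A (ii (l + 1)) mu) hmu, toCoroot_sP A d hsym _ hmu]

lemma pairAl_wP_alP (hsym : ∀ i j, d i * A i j = d j * A j i) (k l : ℕ) :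
    pairAl A d (wP A ii k (alP (ii k))) (wP A ii l (alP (ii l))) =
      d (ii k) * corootRootPairing A ii k l := by
  rw [pairAl_eq_pairQP_toCoroot, toCoroot_wP A d ii hsym k rfl, toCoroot_alP, wQ_zsmul,
    pairQP_smul_left, corootRootPairing]

end Symmetrization

theorem Phi_phi'_der_general {n m : ℕ}
    (A : Fin n → Fin n → ℤ) (d : Fin n → ℤ)
    (hA : ∀ i, A i i = 2)
    (hsym : ∀ i j, d i * A i j = d j * A j i)
    (ii : ℕ → Fin n)
    (k : ℕ) (hk1 : 1 ≤ k) (hk2 : k ≤ m)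
    (l : ℕ) (hl1 : 1 ≤ l) (hl2 : l ≤ m) :
    PhiF A d ii m (phiMap' A ii m (derMap ii m (eps m k)))
        (phiMap' A ii m (derMap ii m (eps m l))) =
      if k = l then -(d (ii k))
      else if k < l then
        -(pairAl A d (wP A ii k (alP (ii k))) (wP A ii l (alP (ii l))))
      else 0 := by
  rw [PhiF_eq_vecMul_dotProduct, phiMap'_derMap_eps_vecMul_phiMatrix A d ii hA hk1 hk2,
    smul_dotProduct, eps_dotProduct hk1 hk2, phiMap'_derMap_eps_apply A ii hA hl1 hl2,
    pairAl_wP_alP A d ii hsym]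
  simp only [Nat.sub_add_cancel hk1, smul_eq_mul]
  rcases lt_trichotomy k l with hkl | rfl | hkl
  · simp [hkl, hkl.ne, hkl.le]
  · simp [corootRootPairing_self A ii hA]
  · simp [hkl.ne', not_le.2 hkl, not_lt.2 hkl.le]

/-- values of `Φ_𝐢` on the vectors `φ'_𝐢(∂_𝐢 ε_k)`. -/
theorem Phi_phi'_der {n m : ℕ} (hm : 1 ≤ m)
    (A : Fin n → Fin n → ℤ) (d : Fin n → ℤ)
    (hA : ∀ i, A i i = 2) (hd : ∀ i, 0 < d i)
    (hsym : ∀ i j, d i * A i j = d j * A j i)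
    (ii : ℕ → Fin n)
    (k : ℕ) (hk1 : 1 ≤ k) (hk2 : k ≤ m)
    (l : ℕ) (hl1 : 1 ≤ l) (hl2 : l ≤ m) :
    PhiF A d ii m (phiMap' A ii m (derMap ii m (eps m k)))
        (phiMap' A ii m (derMap ii m (eps m l))) =
      if k = l then -(d (ii k))
      else if k < l then
        -(pairAl A d (wP A ii k (alP (ii k))) (wP A ii l (alP (ii l))))
      else 0 :=
  Phi_phi'_der_general A d hA hsym ii k hk1 hk2 l hl1 hl2
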